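/- arXiv:2602.03740 — 2 statements merged into one kernel-verified Lean document; each statement's English description precedes it below -/
import Mathlib

section
/- Let X be an arbitrary index set. A function ρ : X × X → ℝ is the non-centered covariance of a unit process on X (a random field with values in {−1, 1}) if, and only if, (1) ρ(x,y) = ρ(y,x) for all x, y ∈ X, (2) ρ(x,x) = 1 for all x ∈ X, and (3) for every positive integer n, every choice of points x₁,…,xₙ ∈ X, and every corner positive real n×n matrix Λ = [λ_{kℓ}], one has ∑_{k,ℓ=1}^n λ_{kℓ} ρ(x_k, x_ℓ) ≥ 0. -/
/-!
Necessity: integrate over the sample paths the inequality `∑ λₖₗ ωₖ ωₗ ≥ 0` that corner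
positivity gives at every `ω ∈ {-1, 1}ⁿ`.

Sufficiency: on finitely many points, a matrix with unit diagonal that pairs nonnegatively with
every corner-positive matrix lies, by Hahn–Banach, in the convex hull of the sign matrices `z zᵀ`,
`z ∈ {-1, 1}ⁿ`; so `ρ` restricted to any finite set is the covariance of a finitely supported unit
process. Taking the limit along an ultrafilter on the finite subsets of `X` yields a finitely
additive probability on the cylinder sets of `{-1, 1}^X`. It is σ-additive, because cylinders are
compact and open, hence extends to a probability measure whose covariance is `ρ`.
-/

open MeasureTheory

def IsNoncenteredCovariance {X : Type*} (E : Set ℝ) (ρ : X → X → ℝ) : Prop :=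
  ∃ P : MeasureTheory.Measure (X → ℝ), MeasureTheory.IsProbabilityMeasure P ∧
    (∀ x : X, ∀ᵐ ω ∂P, ω x ∈ E) ∧
    (∀ x y : X, MeasureTheory.Integrable (fun ω => ω x * ω y) P) ∧
    (∀ x y : X, ρ x y = ∫ ω, ω x * ω y ∂P)

open Set Filter Topology
open scoped ENNReal

def spin (b : Bool) : ℝ := if b then 1 else -1

@[fun_prop]
lemma measurable_spin : Measurable spin := .of_discrete

lemma spin_eq_neg_one_or_eq_one (b : Bool) : spin b = -1 ∨ spin b = 1 := by
  cases b <;> simp [spin]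

lemma abs_spin (b : Bool) : |spin b| = 1 := by
  cases b <;> simp [spin]

lemma spin_mul_spin (a b : Bool) : spin a * spin b = if a = b then 1 else -1 := by
  cases a <;> cases b <;> norm_num [spin]

lemma spin_mul_self (b : Bool) : spin b * spin b = 1 := by
  cases b <;> norm_num [spin]

lemma exists_spin_eq {t : ℝ} (ht : t = -1 ∨ t = 1) : ∃ b, spin b = t := by
  rcases ht with rfl | rfl
  exacts [⟨false, rfl⟩, ⟨true, rfl⟩]

def IsCornerPositive {ι : Type*} [Fintype ι] (Λ : Matrix ι ι ℝ) : Prop :=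
  ∀ z : ι → ℝ, (∀ i, z i = -1 ∨ z i = 1) → 0 ≤ ∑ k, ∑ l, Λ k l * z k * z l

namespace IsNoncenteredCovariance

variable {X : Type*} {E : Set ℝ} {ρ : X → X → ℝ}

theorem symm (h : IsNoncenteredCovariance E ρ) (x y : X) : ρ x y = ρ y x := by
  obtain ⟨P, -, -, -, hρ⟩ := h
  simp only [hρ, mul_comm]

theorem apply_self (h : IsNoncenteredCovariance ({-1, 1} : Set ℝ) ρ) (x : X) : ρ x x = 1 := by
  obtain ⟨P, hP, hmem, -, hρ⟩ := h
  have hsq : ∀ᵐ ω ∂P, ω x * ω x = 1 := (hmem x).mono fun ω hω => by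
    rcases hω with h | h <;> simp_all
  simp [hρ, integral_congr_ae hsq]

theorem sum_mul_nonneg_of_isCornerPositive (h : IsNoncenteredCovariance ({-1, 1} : Set ℝ) ρ)
    {ι : Type*} [Fintype ι] (pts : ι → X) {Λ : Matrix ι ι ℝ} (hΛ : IsCornerPositive Λ) :
    0 ≤ ∑ k, ∑ l, Λ k l * ρ (pts k) (pts l) := by
  obtain ⟨P, -, hmem, hint, hρ⟩ := h
  have hae : ∀ᵐ ω ∂P, 0 ≤ ∑ k, ∑ l, Λ k l * (ω (pts k) * ω (pts l)) := by
    filter_upwards [ae_all_iff.2 fun k => hmem (pts k)] with ω hω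
    simpa only [mul_assoc] using hΛ (fun k => ω (pts k)) hω
  calc 0 ≤ ∫ ω, ∑ k, ∑ l, Λ k l * (ω (pts k) * ω (pts l)) ∂P := integral_nonneg_of_ae hae
    _ = ∑ k, ∑ l, ∫ ω, Λ k l * (ω (pts k) * ω (pts l)) ∂P := by
      rw [integral_finsetSum _ (f := fun k (ω : X → ℝ) => ∑ l, Λ k l * (ω (pts k) * ω (pts l)))
        fun k _ => integrable_finsetSum _ fun l _ => (hint _ _).const_mul _]
      refine Finset.sum_congr rfl fun k _ => integral_finsetSum _ fun l _ => ?_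
      exact (hint _ _).const_mul _
    _ = ∑ k, ∑ l, Λ k l * ρ (pts k) (pts l) := by simp only [integral_const_mul, hρ]

end IsNoncenteredCovariance

lemma LinearMap.apply_eq_sum_mul_single {ι : Type*} [Fintype ι] [DecidableEq ι]
    (f : (ι → ι → ℝ) →ₗ[ℝ] ℝ) (M : ι → ι → ℝ) :
    f M = ∑ k, ∑ l, f (Pi.single k (Pi.single l 1)) * M k l := by
  have hM : M = ∑ k, ∑ l, M k l • Pi.single k (Pi.single l 1) := by
    ext k l
    simp [Finset.sum_apply, Pi.single_apply, ite_apply]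
  conv_lhs => rw [hM]
  simp only [map_sum, map_smul, smul_eq_mul, mul_comm]

theorem mem_convexHull_spin_mul_spin {ι X : Type*} [Fintype ι] {pts : ι → X}
    (hpts : Function.Injective pts) {R : ι → ι → ℝ} (hdiag : ∀ k, R k k = 1)
    (hR : ∀ Λ : Matrix ι ι ℝ, IsCornerPositive Λ → 0 ≤ ∑ k, ∑ l, Λ k l * R k l) :
    R ∈ convexHull ℝ (range fun (ω : X → Bool) k l => spin (ω (pts k)) * spin (ω (pts l))) := by
  classical
  rcases isEmpty_or_nonempty ι with _ | _
  · exact subset_convexHull ℝ _ ⟨fun _ => true, Subsingleton.elim _ _⟩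
  by_contra hR'
  have hfin : (range fun (ω : X → Bool) k l => spin (ω (pts k)) * spin (ω (pts l))).Finite :=
    (finite_range fun (b : ι → Bool) k l => spin (b k) * spin (b l)).subset <| by
      rintro _ ⟨ω, rfl⟩
      exact ⟨ω ∘ pts, rfl⟩
  obtain ⟨f, u, hfR, hfu⟩ := geometric_hahn_banach_point_closed (convex_convexHull ℝ _)
    (hfin.isCompact_convexHull (𝕜 := ℝ)).isClosed hR'
  -- `R` and every `z zᵀ` have unit diagonal, so shifting by `u` along it turns the separation
  -- `f R < u < f (z zᵀ)` into a corner-positive `Λ` with `∑ Λ R < 0`.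
  set Λ : Matrix ι ι ℝ := fun k l =>
    f (Pi.single k (Pi.single l 1)) - if k = l then u / Fintype.card ι else 0
  have hΛ : ∀ M : ι → ι → ℝ, (∀ k, M k k = 1) → ∑ k, ∑ l, Λ k l * M k l = f M - u := by
    intro M hM
    have hcard : (Fintype.card ι : ℝ) ≠ 0 := Nat.cast_ne_zero.2 Fintype.card_ne_zero
    simp only [Λ, sub_mul, Finset.sum_sub_distrib, ite_mul, zero_mul, Finset.sum_ite_eq,
      Finset.mem_univ, if_true, hM, mul_one, Finset.sum_const, Finset.card_univ, nsmul_eq_mul]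
    have hf := (f : (ι → ι → ℝ) →ₗ[ℝ] ℝ).apply_eq_sum_mul_single M
    simp only [ContinuousLinearMap.coe_coe] at hf
    rw [← hf, mul_div_cancel₀ _ hcard]
  have hΛpos : IsCornerPositive Λ := by
    intro z hz
    choose b hb using fun i => exists_spin_eq (hz i)
    have := hfu _ (subset_convexHull ℝ _ ⟨Function.extend pts b fun _ => true, rfl⟩)
    rw [← sub_pos, ← hΛ _ fun k => by simp [hpts.extend_apply, spin_mul_self]] at this
    refine this.le.trans_eq ?_
    simp [hpts.extend_apply, hb, mul_assoc]
  have := hR Λ hΛpos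
  rw [hΛ R hdiag] at this
  linarith

theorem exists_isProbabilityMeasure_integral_eq_of_mem_convexHull {Ω E : Type*}
    [MeasurableSpace Ω] [AddCommGroup E] [Module ℝ E] {F : Ω → E} {R : E}
    (hR : R ∈ convexHull ℝ (range F)) :
    ∃ ν : Measure Ω, IsProbabilityMeasure ν ∧
      ∀ L : E →ₗ[ℝ] ℝ, Measurable (fun ω => L (F ω)) → ∫ ω, L (F ω) ∂ν = L R := by
  obtain ⟨κ, _, w, z, hw0, hw1, hz, rfl⟩ := mem_convexHull_iff_exists_fintype.1 hR
  choose ω hω using hz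
  refine ⟨∑ i, ENNReal.ofReal (w i) • Measure.dirac (ω i), ⟨?_⟩, fun L hL => ?_⟩
  · simp [← ENNReal.ofReal_sum_of_nonneg fun i _ => hw0 i, hw1]
  · have hint : ∀ i, Integrable (fun ω => L (F ω)) (ENNReal.ofReal (w i) • Measure.dirac (ω i)) :=
      fun i => (integrable_dirac' hL.stronglyMeasurable (by simp)).smul_measure
        ENNReal.ofReal_ne_top
    rw [integral_finsetSum_measure fun i _ => hint i]
    simp [integral_smul_measure, integral_dirac' _ _ hL.stronglyMeasurable, hw0, hω]

section FiniteDiscreteProduct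

variable {X : Type*} {α : X → Type*} [∀ x, TopologicalSpace (α x)] [∀ x, DiscreteTopology (α x)]
  [∀ x, MeasurableSpace (α x)]

lemma isClopen_of_mem_measurableCylinders {A : Set (∀ x, α x)}
    (hA : A ∈ measurableCylinders α) : IsClopen A := by
  obtain ⟨s, S, -, rfl⟩ := (mem_measurableCylinders A).1 hA
  exact (isClopen_discrete S).preimage (continuous_pi fun i => continuous_apply _)

variable [∀ x, Finite (α x)]

lemma MeasureTheory.AddContent.isSigmaSubadditive_of_finite_discrete
    (m : AddContent ℝ≥0∞ (measurableCylinders α)) : m.IsSigmaSubadditive := by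
  intro f hf hU
  obtain ⟨I, hI⟩ := (isClopen_of_mem_measurableCylinders hU).isClosed.isCompact.elim_finite_subcover
    f (fun i => (isClopen_of_mem_measurableCylinders (hf i)).isOpen) subset_rfl
  calc m (⋃ i, f i) ≤ m (⋃ i ∈ I, f i) :=
        addContent_mono isSetSemiring_measurableCylinders hU
          (isSetRing_measurableCylinders.biUnion_mem I fun i _ => hf i) hI
    _ ≤ ∑ i ∈ I, m (f i) := addContent_biUnion_le isSetRing_measurableCylinders fun i _ => hf i
    _ ≤ ∑' i, m (f i) := ENNReal.sum_le_tsum I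

theorem exists_measure_tendsto_on_measurableCylinders {ι : Type*} (U : Ultrafilter ι)
    (ν : ι → Measure (∀ x, α x)) :
    ∃ μ : Measure (∀ x, α x), ∀ A ∈ measurableCylinders α,
      Tendsto (fun i => ν i A) U (𝓝 (μ A)) := by
  -- `ℝ≥0∞` is compact, so every `ν · A` converges along `U`.
  set m : Set (∀ x, α x) → ℝ≥0∞ := fun A => (U.map fun i => ν i A).lim
  have hm : ∀ A, Tendsto (fun i => ν i A) U (𝓝 (m A)) := fun A => Ultrafilter.le_nhds_lim _
  have hm_eq : ∀ {A c}, Tendsto (fun i => ν i A) U (𝓝 c) → m A = c :=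
    fun h => tendsto_nhds_unique (hm _) h
  let C : AddContent ℝ≥0∞ (measurableCylinders α) :=
    isSetRing_measurableCylinders.addContent_of_union m
      (hm_eq (by simp)) fun _ hB hAB => hm_eq <| by
        simpa only [measure_union hAB (MeasurableSet.of_mem_measurableCylinders hB)]
          using (hm _).add (hm _)
  refine ⟨C.measure isSetSemiring_measurableCylinders generateFrom_measurableCylinders.ge
    C.isSigmaSubadditive_of_finite_discrete, fun A hA => ?_⟩
  rw [C.measure_eq _ generateFrom_measurableCylinders.symm _ hA]
  exact hm A

end FiniteDiscreteProduct

lemma setOf_apply_eq_apply_mem_measurableCylinders {X β : Type*} [MeasurableSpace β]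
    [MeasurableEq β] (x y : X) :
    {ω : X → β | ω x = ω y} ∈ measurableCylinders fun _ : X => β := by
  classical
  exact (mem_measurableCylinders _).2 ⟨{x, y}, {z | z ⟨x, by simp⟩ = z ⟨y, by simp⟩},
    measurableSet_eq_fun (measurable_pi_apply _) (measurable_pi_apply _), rfl⟩

lemma integral_spin_mul_spin {X : Type*} (μ : Measure (X → Bool)) [IsProbabilityMeasure μ]
    (x y : X) :
    ∫ ω, spin (ω x) * spin (ω y) ∂μ = 2 * μ.real {ω | ω x = ω y} - 1 := by
  have hE : MeasurableSet {ω : X → Bool | ω x = ω y} :=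
    measurableSet_eq_fun (measurable_pi_apply _) (measurable_pi_apply _)
  have h : (fun ω : X → Bool => spin (ω x) * spin (ω y))
      = fun ω => 2 * {ω : X → Bool | ω x = ω y}.indicator 1 ω - 1 := by
    ext ω
    by_cases hω : ω x = ω y <;> simp [spin_mul_spin, hω]
    norm_num
  rw [h, integral_sub ((integrable_const 1).indicator hE |>.const_mul 2) (integrable_const 1),
    integral_const_mul, integral_indicator_one hE]
  simp

section Realization

variable {X : Type*} {ρ : X → X → ℝ}

theorem exists_isProbabilityMeasure_integral_spin_eq_on_finset (hdiag : ∀ x, ρ x x = 1)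
    (hpos : ∀ (n : ℕ), 0 < n → ∀ (pts : Fin n → X) (Λ : Matrix (Fin n) (Fin n) ℝ),
      IsCornerPositive Λ → 0 ≤ ∑ k, ∑ l, Λ k l * ρ (pts k) (pts l))
    (G : Finset X) :
    ∃ ν : Measure (X → Bool), IsProbabilityMeasure ν ∧
      ∀ x ∈ G, ∀ y ∈ G, ∫ ω, spin (ω x) * spin (ω y) ∂ν = ρ x y := by
  set pts : Fin G.card → X := fun k => G.equivFin.symm k
  have hpts : Function.Injective pts := Subtype.val_injective.comp G.equivFin.symm.injective
  have hR := mem_convexHull_spin_mul_spin hpts (R := fun k l => ρ (pts k) (pts l))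
    (fun k => hdiag _) fun Λ hΛ => by
      rcases Nat.eq_zero_or_pos G.card with h | h
      · have : IsEmpty (Fin G.card) := h ▸ Fin.isEmpty'
        simp
      · exact hpos _ h pts Λ hΛ
  obtain ⟨ν, hν, hνR⟩ := exists_isProbabilityMeasure_integral_eq_of_mem_convexHull hR
  refine ⟨ν, hν, fun x hx y hy => ?_⟩
  obtain ⟨k, rfl⟩ : ∃ k, pts k = x := ⟨G.equivFin ⟨x, hx⟩, by simp [pts]⟩
  obtain ⟨l, rfl⟩ : ∃ l, pts l = y := ⟨G.equivFin ⟨y, hy⟩, by simp [pts]⟩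
  exact hνR (LinearMap.proj l ∘ₗ LinearMap.proj k) (by fun_prop)

theorem exists_isProbabilityMeasure_integral_spin_eq_of_forall_finset
    (hfin : ∀ G : Finset X, ∃ ν : Measure (X → Bool), IsProbabilityMeasure ν ∧
      ∀ x ∈ G, ∀ y ∈ G, ∫ ω, spin (ω x) * spin (ω y) ∂ν = ρ x y) :
    ∃ μ : Measure (X → Bool), IsProbabilityMeasure μ ∧
      ∀ x y, ∫ ω, spin (ω x) * spin (ω y) ∂μ = ρ x y := by
  classical
  choose ν hν hνρ using hfin
  set U := Ultrafilter.of (atTop : Filter (Finset X))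
  obtain ⟨μ, hμ⟩ := exists_measure_tendsto_on_measurableCylinders U ν
  have : IsProbabilityMeasure μ :=
    ⟨tendsto_nhds_unique (hμ univ (univ_mem_measurableCylinders _)) (by simp)⟩
  refine ⟨μ, this, fun x y => ?_⟩
  have hE := setOf_apply_eq_apply_mem_measurableCylinders (β := Bool) x y
  have hlim : Tendsto (fun G => (ν G).real {ω | ω x = ω y}) U (𝓝 (μ.real {ω | ω x = ω y})) :=
    (ENNReal.tendsto_toReal (measure_ne_top μ _)).comp (hμ _ hE)
  have hconst : ∀ᶠ G in U, (1 + ρ x y) / 2 = (ν G).real {ω | ω x = ω y} := by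
    refine Ultrafilter.of_le _ ((eventually_ge_atTop {x, y}).mono fun G hG => ?_)
    have := hνρ G x (hG (by simp)) y (hG (by simp))
    rw [integral_spin_mul_spin] at this
    linarith
  rw [integral_spin_mul_spin, tendsto_nhds_unique hlim (tendsto_const_nhds.congr' hconst)]
  ring

theorem isNoncenteredCovariance_of_integral_spin (μ : Measure (X → Bool))
    [IsProbabilityMeasure μ] (hμ : ∀ x y, ∫ ω, spin (ω x) * spin (ω y) ∂μ = ρ x y) :
    IsNoncenteredCovariance ({-1, 1} : Set ℝ) ρ := by
  have hψ : Measurable fun (ω : X → Bool) (x : X) => spin (ω x) := by fun_prop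
  have hmul : ∀ x y, Measurable fun g : X → ℝ => g x * g y := by fun_prop
  refine ⟨μ.map fun ω x => spin (ω x), Measure.isProbabilityMeasure_map hψ.aemeasurable,
    fun x => ?_, fun x y => ?_, fun x y => ?_⟩
  · rw [ae_map_iff hψ.aemeasurable
      (((measurableSet_singleton 1).insert (-1)).preimage (measurable_pi_apply x))]
    exact ae_of_all _ fun ω => spin_eq_neg_one_or_eq_one _
  · refine (integrable_map_measure (hmul x y).aestronglyMeasurable hψ.aemeasurable).2 ?_
    exact .of_bound (by fun_prop) 1 (ae_of_all _ fun ω => by simp [abs_spin])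
  · rw [integral_map hψ.aemeasurable (hmul x y).aestronglyMeasurable, hμ]

end Realization

theorem stmt14 {X : Type*} (ρ : X → X → ℝ) :
    IsNoncenteredCovariance ({-1, 1} : Set ℝ) ρ ↔
    ((∀ x y, ρ x y = ρ y x) ∧
     (∀ x, ρ x x = 1) ∧
     ∀ (n : ℕ), 0 < n → ∀ (pts : Fin n → X) (Λ : Matrix (Fin n) (Fin n) ℝ),
       (∀ z : Fin n → ℝ, (∀ i, z i = -1 ∨ z i = 1) →
         0 ≤ ∑ k, ∑ l, Λ k l * z k * z l) →
       0 ≤ ∑ k, ∑ l, Λ k l * ρ (pts k) (pts l)) := by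
  refine ⟨fun h => ⟨h.symm, h.apply_self, fun _ _ pts _ hΛ =>
    h.sum_mul_nonneg_of_isCornerPositive pts hΛ⟩, fun ⟨_, hdiag, hpos⟩ => ?_⟩
  obtain ⟨μ, hμ, hμρ⟩ := exists_isProbabilityMeasure_integral_spin_eq_of_forall_finset
    (exists_isProbabilityMeasure_integral_spin_eq_on_finset hdiag hpos)
  exact isNoncenteredCovariance_of_integral_spin μ hμρ
end

section
/- Let X be an arbitrary index set and let ρ : X × X → [−1, 1] be the non-centered covariance of a random field on X with values in the interval [−1, 1]. Define ρ* : X × X → ℝ by ρ*(x,y) = ρ(x,y) if x ≠ y and ρ*(x,x) = 1. Then ρ* is the non-centered covariance of a unit process on X (a random field with values in {−1, 1}). -/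
/-!
Randomized rounding: with independent uniform noise `u x ∈ [0, 1]`, replace `ω x ∈ [-1, 1]` by
`1` if `u x < (1 + ω x) / 2` and by `-1` otherwise. Given `ω`, the signs at two distinct points
are independent with means `ω x` and `ω y`, so their product has mean `ω x * ω y`, while the
square of a sign is `1`. Averaging over `ω` gives `ρ` off the diagonal and `1` on it.
-/

open MeasureTheory

open Set unitInterval

theorem integral_infinitePi_eval_mul_eval {ι : Type*} {Ω : ι → Type*}
    [∀ i, MeasurableSpace (Ω i)] (μ : ∀ i, Measure (Ω i)) [∀ i, IsProbabilityMeasure (μ i)]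
    {i j : ι} (hij : i ≠ j) {f : Ω i → ℝ} {g : Ω j → ℝ}
    (hf : AEStronglyMeasurable f (μ i)) (hg : AEStronglyMeasurable g (μ j)) :
    ∫ ω, f (ω i) * g (ω j) ∂Measure.infinitePi μ = (∫ a, f a ∂μ i) * ∫ b, g b ∂μ j := by
  have hmap := Measure.infinitePi_map_eval_prod (P := μ) hij
  rw [← integral_prod_mul, ← hmap, integral_map (by fun_prop)]
  rw [hmap]
  exact hf.comp_fst.mul hg.comp_snd

namespace RandomRounding

noncomputable section

def randomSign (p u : I) : ℝ := if u < p then 1 else -1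

lemma randomSign_mem (p u : I) : randomSign p u ∈ ({-1, 1} : Set ℝ) := by
  unfold randomSign; split_ifs <;> simp

lemma randomSign_mul_self (p u : I) : randomSign p u * randomSign p u = 1 := by
  unfold randomSign; split_ifs <;> norm_num

lemma abs_randomSign (p u : I) : |randomSign p u| = 1 := by
  unfold randomSign; split_ifs <;> norm_num

lemma measurable_randomSign : Measurable fun q : I × I => randomSign q.1 q.2 :=
  Measurable.ite (measurableSet_lt measurable_snd measurable_fst) measurable_const measurable_const

lemma randomSign_eq_indicator (p : I) :
    randomSign p = fun u => 2 * (Iio p).indicator 1 u - 1 := by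
  ext u; unfold randomSign; by_cases h : u < p <;> simp [h]; norm_num

lemma integral_randomSign (p : I) : ∫ u, randomSign p u = 2 * p - 1 := by
  rw [randomSign_eq_indicator, integral_sub, integral_const_mul,
    integral_indicator_one measurableSet_Iio]
  · simp [measureReal_def, p.2.1]
  · exact (integrable_const (1 : ℝ)).indicator measurableSet_Iio |>.const_mul 2
  · exact integrable_const 1

def signThreshold (t : ℝ) : I := projIcc 0 1 zero_le_one ((1 + t) / 2)

lemma measurable_signThreshold : Measurable signThreshold :=
  (continuous_projIcc.comp (by fun_prop)).measurable

lemma two_mul_signThreshold_sub_one {t : ℝ} (ht : t ∈ Icc (-1) 1) :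
    2 * (signThreshold t : ℝ) - 1 = t := by
  rw [signThreshold, projIcc_of_mem _ ⟨by linarith [ht.1], by linarith [ht.2]⟩]
  ring

variable (X : Type*)

def noise : Measure (X → I) := Measure.infinitePi fun _ => volume

instance : IsProbabilityMeasure (noise X) := by unfold noise; infer_instance

def randomRounding (q : (X → ℝ) × (X → I)) (x : X) : ℝ :=
  randomSign (signThreshold (q.1 x)) (q.2 x)

variable {X}

lemma measurable_randomRounding_apply (x : X) :
    Measurable fun q : (X → ℝ) × (X → I) => randomRounding X q x :=
  measurable_randomSign.comp <|
    (measurable_signThreshold.comp ((measurable_pi_apply x).comp measurable_fst)).prodMk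
      ((measurable_pi_apply x).comp measurable_snd)

lemma measurable_randomRounding : Measurable (randomRounding X) :=
  measurable_pi_lambda _ measurable_randomRounding_apply

lemma integral_randomRounding_mul_of_ne {x y : X} (hxy : x ≠ y) {ω : X → ℝ}
    (hx : ω x ∈ Icc (-1) 1) (hy : ω y ∈ Icc (-1) 1) :
    ∫ u, randomRounding X (ω, u) x * randomRounding X (ω, u) y ∂noise X = ω x * ω y := by
  have hsign (t : ℝ) : AEStronglyMeasurable (randomSign (signThreshold t)) volume :=
    (measurable_randomSign.comp (measurable_const.prodMk measurable_id)).aestronglyMeasurable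
  simp only [randomRounding]
  rw [noise, integral_infinitePi_eval_mul_eval _ hxy (hsign _) (hsign _), integral_randomSign,
    integral_randomSign, two_mul_signThreshold_sub_one hx, two_mul_signThreshold_sub_one hy]

variable {P : Measure (X → ℝ)} [IsProbabilityMeasure P]

lemma integrable_randomRounding_mul (x y : X) :
    Integrable (fun q => randomRounding X q x * randomRounding X q y) (P.prod (noise X)) := by
  refine (integrable_const (1 : ℝ)).mono'
    ((measurable_randomRounding_apply x).mul
      (measurable_randomRounding_apply y)).aestronglyMeasurable
    (ae_of_all _ fun q => ?_)
  simp [randomRounding, abs_randomSign]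

lemma integral_randomRounding_mul [DecidableEq X] (hP : ∀ x, ∀ᵐ ω ∂P, ω x ∈ Icc (-1) 1)
    (x y : X) :
    ∫ q, randomRounding X q x * randomRounding X q y ∂P.prod (noise X)
      = if x = y then 1 else ∫ ω, ω x * ω y ∂P := by
  split_ifs with hxy
  · subst hxy
    simp [randomRounding, randomSign_mul_self]
  · rw [integral_prod _ (integrable_randomRounding_mul x y)]
    refine integral_congr_ae ?_
    filter_upwards [hP x, hP y] with ω hx hy
    exact integral_randomRounding_mul_of_ne hxy hx hy

end

end RandomRounding

open RandomRounding in
theorem stmt15_general {X : Type*} [DecidableEq X] (ρ : X → X → ℝ)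
    (hcov : IsNoncenteredCovariance (Set.Icc (-1 : ℝ) 1) ρ) :
    IsNoncenteredCovariance ({-1, 1} : Set ℝ)
      (fun x y => if x = y then 1 else ρ x y) := by
  obtain ⟨P, hP, hPE, -, hPρ⟩ := hcov
  have hR : Measurable (randomRounding X) := measurable_randomRounding
  have hmul (x y : X) : Measurable fun ω : X → ℝ => ω x * ω y := by fun_prop
  refine ⟨(P.prod (noise X)).map (randomRounding X),
    Measure.isProbabilityMeasure_map hR.aemeasurable, fun x => ?_, fun x y => ?_, fun x y => ?_⟩
  · have hS : MeasurableSet {ω : X → ℝ | ω x ∈ ({-1, 1} : Set ℝ)} :=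
      measurable_pi_apply x ((MeasurableSet.singleton 1).insert (-1))
    exact (ae_map_iff hR.aemeasurable hS).2 (ae_of_all _ fun q => randomSign_mem _ _)
  · rw [integrable_map_measure (hmul x y).aestronglyMeasurable hR.aemeasurable]
    exact integrable_randomRounding_mul x y
  · rw [integral_map hR.aemeasurable (hmul x y).aestronglyMeasurable,
      integral_randomRounding_mul hPE, ← hPρ]

theorem stmt15 {X : Type*} [DecidableEq X] (ρ : X → X → ℝ)
    (hρ : ∀ x y, ρ x y ∈ Set.Icc (-1 : ℝ) 1)
    (hcov : IsNoncenteredCovariance (Set.Icc (-1 : ℝ) 1) ρ) :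
    IsNoncenteredCovariance ({-1, 1} : Set ℝ)
      (fun x y => if x = y then 1 else ρ x y) :=
  stmt15_general ρ hcov
end
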